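/- Suppose the constraints are population-level and boundedness holds; fix c1, c2, c3, c4 > 0. Then (π*, L*) is a CMFG Nash equilibrium if and only if each L*_t ∈ Δ(S×A), π* ∈ Π(L*), and there exists (y*, z*, w*) with ‖y*‖_1 ≤ (|S||𝒯|(|𝒯|+1)/2)·r_max, z* ≥ 0, ‖z*‖_1 ≤ |S||A|(|𝒯|² − |𝒯| + 2)·r_max, and 0 ≤ w* ≤ γ0, such that c1‖A_{L*}^⊤y* + z* + r_{L*}‖_2 + c2‖A_{L*}L* − b‖_2 + c3·(z*)^⊤L* + c4‖γ0 − c_{L*}L* − w*‖_2 = 0 (here c_{L*}L* = Σ_{t∈𝒯} c_t(L*_t) since each L*_t sums to 1), i.e., (L*, y*, z*, w*) is an optimal solution of the population-level CMFOMO problem with optimal value 0. -/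
import Mathlib


open Finset

namespace CMFG

/-- Membership in the probability simplex on a finite type. -/
def IsSimplex {X : Type*} [Fintype X] (f : X → ℝ) : Prop :=
  (∀ x, 0 ≤ f x) ∧ ∑ x, f x = 1

variable {S A : Type*} [Fintype S] [Fintype A]

/-- A (Markov, randomized) policy: `π t s ∈ Δ(A)` for every time `t` and state `s`. -/
def IsPolicy (π : ℕ → S → A → ℝ) : Prop := ∀ t s, IsSimplex (π t s)

/-- A mean-field flow: `L t ∈ Δ(S × A)` for every time `t`. -/
def IsFlow (L : ℕ → S × A → ℝ) : Prop := ∀ t, IsSimplex (L t)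

/-- The transition data is a Markov kernel: `p t s a m ∈ Δ(S)` whenever `m ∈ Δ(S × A)`. -/
def IsKernel (T : ℕ) (p : ℕ → S → A → (S × A → ℝ) → S → ℝ) : Prop :=
  ∀ t ≤ T, ∀ s a m, IsSimplex m → IsSimplex (p t s a m)

/-- The occupation measure `Ψ(π, L)` of a representative agent using policy `π`
under the mean-field flow `L`. -/
def psi (μ0 : S → ℝ) (p : ℕ → S → A → (S × A → ℝ) → S → ℝ)
    (π : ℕ → S → A → ℝ) (L : ℕ → S × A → ℝ) : ℕ → S × A → ℝ
  | 0 => fun sa => π 0 sa.1 sa.2 * μ0 sa.1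
  | t + 1 => fun sa =>
      π (t + 1) sa.1 sa.2 *
        ∑ sa' : S × A, p t sa'.1 sa'.2 (L t) sa.1 * psi μ0 p π L t sa'

/-- The mean-field flow `Ψ(π)` induced by the policy `π` alone. -/
def psiInd (μ0 : S → ℝ) (p : ℕ → S → A → (S × A → ℝ) → S → ℝ)
    (π : ℕ → S → A → ℝ) : ℕ → S × A → ℝ
  | 0 => fun sa => π 0 sa.1 sa.2 * μ0 sa.1
  | t + 1 => fun sa =>
      π (t + 1) sa.1 sa.2 *
        ∑ sa' : S × A, p t sa'.1 sa'.2 (psiInd μ0 p π t) sa.1 * psiInd μ0 p π t sa'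

/-- Expected cumulative reward `V^π(L)` of policy `π` under the mean-field flow `L`. -/
def V (T : ℕ) (μ0 : S → ℝ) (p : ℕ → S → A → (S × A → ℝ) → S → ℝ)
    (r : ℕ → S → A → (S × A → ℝ) → ℝ) (π : ℕ → S → A → ℝ) (L : ℕ → S × A → ℝ) : ℝ :=
  ∑ t ∈ Finset.range (T + 1), ∑ sa : S × A, r t sa.1 sa.2 (L t) * psi μ0 p π L t sa

/-- Expected cumulative cost `𝒞^π(L) ∈ ℝ^k` of policy `π` under the mean-field flow `L`. -/
def Cost (T k : ℕ) (μ0 : S → ℝ) (p : ℕ → S → A → (S × A → ℝ) → S → ℝ)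
    (c : ℕ → S → A → (S × A → ℝ) → Fin k → ℝ) (π : ℕ → S → A → ℝ)
    (L : ℕ → S × A → ℝ) : Fin k → ℝ :=
  fun i => ∑ t ∈ Finset.range (T + 1), ∑ sa : S × A, c t sa.1 sa.2 (L t) i * psi μ0 p π L t sa

/-- `π` is an optimal policy of the constrained MDP `CMDP(L)` with threshold `γ0`. -/
def IsCMDPOptimal (T k : ℕ) (μ0 : S → ℝ) (p : ℕ → S → A → (S × A → ℝ) → S → ℝ)
    (r : ℕ → S → A → (S × A → ℝ) → ℝ) (c : ℕ → S → A → (S × A → ℝ) → Fin k → ℝ)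
    (γ0 : Fin k → ℝ) (π : ℕ → S → A → ℝ) (L : ℕ → S × A → ℝ) : Prop :=
  IsPolicy π ∧ (∀ i, Cost T k μ0 p c π L i ≤ γ0 i) ∧
    ∀ π', IsPolicy π' → (∀ i, Cost T k μ0 p c π' L i ≤ γ0 i) →
      V T μ0 p r π' L ≤ V T μ0 p r π L

/-- `π` is an optimal policy of the unconstrained MDP `MDP(L)`. -/
def IsMDPOptimal (T : ℕ) (μ0 : S → ℝ) (p : ℕ → S → A → (S × A → ℝ) → S → ℝ)
    (r : ℕ → S → A → (S × A → ℝ) → ℝ) (π : ℕ → S → A → ℝ) (L : ℕ → S × A → ℝ) : Prop :=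
  IsPolicy π ∧ ∀ π', IsPolicy π' → V T μ0 p r π' L ≤ V T μ0 p r π L

/-- `(π, L)` is a Nash equilibrium of the constrained mean-field game (Definition 2.1):
optimality for `CMDP(L)` together with the consistency condition `L = Ψ(π)` on `𝒯`. -/
def IsCMFGNash (T k : ℕ) (μ0 : S → ℝ) (p : ℕ → S → A → (S × A → ℝ) → S → ℝ)
    (r : ℕ → S → A → (S × A → ℝ) → ℝ) (c : ℕ → S → A → (S × A → ℝ) → Fin k → ℝ)
    (γ0 : Fin k → ℝ) (π : ℕ → S → A → ℝ) (L : ℕ → S × A → ℝ) : Prop :=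
  IsCMDPOptimal T k μ0 p r c γ0 π L ∧ ∀ t ≤ T, L t = psiInd μ0 p π t

/-- Strict feasibility (Assumption 3.1) with margin `δ`. -/
def StrictFeasible (T k : ℕ) (μ0 : S → ℝ) (p : ℕ → S → A → (S × A → ℝ) → S → ℝ)
    (c : ℕ → S → A → (S × A → ℝ) → Fin k → ℝ) (γ0 : Fin k → ℝ) (δ : ℝ) : Prop :=
  0 < δ ∧ ∀ L, IsFlow L → ∀ i : Fin k, ∃ π, IsPolicy π ∧
    (∀ j, Cost T k μ0 p c π L j ≤ γ0 j) ∧ Cost T k μ0 p c π L i ≤ γ0 i - δ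

/-- Strengthened strict feasibility (Assumption 5.1) with margin `δ`. -/
def StrongFeasible (T k : ℕ) (μ0 : S → ℝ) (p : ℕ → S → A → (S × A → ℝ) → S → ℝ)
    (c : ℕ → S → A → (S × A → ℝ) → Fin k → ℝ) (γ0 : Fin k → ℝ) (δ : ℝ) : Prop :=
  0 < δ ∧ ∀ L, IsFlow L → ∃ π, IsPolicy π ∧ ∀ i, Cost T k μ0 p c π L i ≤ γ0 i - δ

/-- Continuity (Assumption 3.2): `p`, `r`, `c` are continuous in the mean-field argument. -/
def ContinuousData (T k : ℕ) (p : ℕ → S → A → (S × A → ℝ) → S → ℝ)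
    (r : ℕ → S → A → (S × A → ℝ) → ℝ)
    (c : ℕ → S → A → (S × A → ℝ) → Fin k → ℝ) : Prop :=
  (∀ t ≤ T, ∀ s a, ContinuousOn (fun m : S × A → ℝ => p t s a m) {m | IsSimplex m}) ∧
  (∀ t ≤ T, ∀ s a, ContinuousOn (fun m : S × A → ℝ => r t s a m) {m | IsSimplex m}) ∧
  (∀ t ≤ T, ∀ s a, ContinuousOn (fun m : S × A → ℝ => c t s a m) {m | IsSimplex m})

/-- Boundedness: `0 ≤ r ≤ rmax` and `0 ≤ c ≤ cmax` entrywise on the simplex. -/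
def BoundedData (T k : ℕ) (r : ℕ → S → A → (S × A → ℝ) → ℝ)
    (c : ℕ → S → A → (S × A → ℝ) → Fin k → ℝ) (rmax cmax : ℝ) : Prop :=
  ∀ t ≤ T, ∀ s a m, IsSimplex m →
    (0 ≤ r t s a m ∧ r t s a m ≤ rmax) ∧ ∀ i, 0 ≤ c t s a m i ∧ c t s a m i ≤ cmax

/-- The ℓ¹ norm of a finitely supported real vector. -/
def norm1 {J : Type*} [Fintype J] (v : J → ℝ) : ℝ := ∑ j, |v j|

/-- The ℓ² norm of a finitely supported real vector. -/
noncomputable def norm2 {J : Type*} [Fintype J] (v : J → ℝ) : ℝ :=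
  Real.sqrt (∑ j, (v j) ^ 2)

/-- Lipschitz continuity (Assumption 3.3) of `p`, `r`, `c` in the mean-field argument. -/
def LipschitzData (T k : ℕ) (p : ℕ → S → A → (S × A → ℝ) → S → ℝ)
    (r : ℕ → S → A → (S × A → ℝ) → ℝ)
    (c : ℕ → S → A → (S × A → ℝ) → Fin k → ℝ) (Cp Cr Cc : ℝ) : Prop :=
  0 < Cp ∧ 0 < Cr ∧ 0 < Cc ∧
  ∀ t ≤ T, ∀ m1 m2 : S × A → ℝ, IsSimplex m1 → IsSimplex m2 →
    ((∑ sa : S × A, ∑ s' : S, |p t sa.1 sa.2 m1 s' - p t sa.1 sa.2 m2 s'|) ≤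
        Cp * norm1 (fun sa => m1 sa - m2 sa)) ∧
    ((∑ sa : S × A, |r t sa.1 sa.2 m1 - r t sa.1 sa.2 m2|) ≤
        Cr * norm1 (fun sa => m1 sa - m2 sa)) ∧
    ((∑ sa : S × A, ∑ i, |c t sa.1 sa.2 m1 i - c t sa.1 sa.2 m2 i|) ≤
        Cc * norm1 (fun sa => m1 sa - m2 sa))

/-- Lipschitz continuity of the transition kernels alone. -/
def LipschitzKernel (T : ℕ) (p : ℕ → S → A → (S × A → ℝ) → S → ℝ) (Cp : ℝ) : Prop :=
  0 < Cp ∧ ∀ t ≤ T, ∀ m1 m2 : S × A → ℝ, IsSimplex m1 → IsSimplex m2 →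
    (∑ sa : S × A, ∑ s' : S, |p t sa.1 sa.2 m1 s' - p t sa.1 sa.2 m2 s'|) ≤
      Cp * norm1 (fun sa => m1 sa - m2 sa)

/-- The reward vector `r_L ∈ ℝ^{|S||A||𝒯|}`. -/
def rLvec (T : ℕ) (r : ℕ → S → A → (S × A → ℝ) → ℝ) (L : ℕ → S × A → ℝ) :
    Fin (T + 1) × S × A → ℝ :=
  fun x => r (x.1 : ℕ) x.2.1 x.2.2 (L (x.1 : ℕ))

/-- The cost matrix `c_L ∈ ℝ^{k × |S||A||𝒯|}`. -/
def cLmat (T k : ℕ) (c : ℕ → S → A → (S × A → ℝ) → Fin k → ℝ) (L : ℕ → S × A → ℝ) :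
    Fin k → Fin (T + 1) × S × A → ℝ :=
  fun i x => c (x.1 : ℕ) x.2.1 x.2.2 (L (x.1 : ℕ)) i

/-- The right-hand-side vector `b ∈ ℝ^{|S||𝒯|}`. -/
def bvec (T : ℕ) (μ0 : S → ℝ) : Fin (T + 1) × S → ℝ :=
  fun row => if (row.1 : ℕ) = T then μ0 row.2 else 0

/-- The constraint matrix `A_L ∈ ℝ^{|S||𝒯| × |S||A||𝒯|}`; `A_L d = b` encodes
`Σ_a d_0(s,a) = μ0(s)` and `Σ_a d_{t+1}(s,a) = Σ_{s',a'} p_t(s|s',a',L_t) d_t(s',a')`. -/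
def ALmat [DecidableEq S] (T : ℕ) (p : ℕ → S → A → (S × A → ℝ) → S → ℝ)
    (L : ℕ → S × A → ℝ) : Fin (T + 1) × S → Fin (T + 1) × S × A → ℝ :=
  fun row col =>
    if (row.1 : ℕ) < T then
      (if col.1 = row.1 then p (row.1 : ℕ) col.2.1 col.2.2 (L (row.1 : ℕ)) row.2 else 0) +
        (if (col.1 : ℕ) = (row.1 : ℕ) + 1 ∧ col.2.1 = row.2 then -1 else 0)
    else if (col.1 : ℕ) = 0 ∧ col.2.1 = row.2 then 1 else 0

/-- Matrix–vector product. -/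
def mulVec {I J : Type*} [Fintype J] (M : I → J → ℝ) (v : J → ℝ) : I → ℝ :=
  fun i => ∑ j, M i j * v j

/-- Transposed matrix–vector product `M^⊤ y`. -/
def tmulVec {I J : Type*} [Fintype I] (M : I → J → ℝ) (y : I → ℝ) : J → ℝ :=
  fun j => ∑ i, M i j * y i

/-- Euclidean inner product. -/
def dot {J : Type*} [Fintype J] (u v : J → ℝ) : ℝ := ∑ j, u j * v j

/-- View a vector indexed by `Fin (T+1) × S × A` as a time-indexed family. -/
def toFam (T : ℕ) (d : Fin (T + 1) × S × A → ℝ) : ℕ → S × A → ℝ :=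
  fun t sa => if h : t < T + 1 then d (⟨t, h⟩, sa.1, sa.2) else 0

/-- View a time-indexed family as a vector indexed by `Fin (T+1) × S × A`. -/
def toVec (T : ℕ) (d : ℕ → S × A → ℝ) : Fin (T + 1) × S × A → ℝ :=
  fun x => d (x.1 : ℕ) (x.2.1, x.2.2)

/-- `π ∈ Π(d)`: `π` is a policy inducing the occupation measure `d` wherever
`d` puts positive mass on a state. -/
def InPi (T : ℕ) (d : ℕ → S × A → ℝ) (π : ℕ → S → A → ℝ) : Prop :=
  IsPolicy π ∧ ∀ t ≤ T, ∀ s a, 0 < ∑ a' : A, d t (s, a') →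
    π t s a = d t (s, a) / ∑ a' : A, d t (s, a')

/-- Feasibility for the linear program `LP(L)`. -/
def LPFeasible [DecidableEq S] (T k : ℕ) (μ0 : S → ℝ)
    (p : ℕ → S → A → (S × A → ℝ) → S → ℝ)
    (c : ℕ → S → A → (S × A → ℝ) → Fin k → ℝ) (γ0 : Fin k → ℝ)
    (L : ℕ → S × A → ℝ) (d : Fin (T + 1) × S × A → ℝ) : Prop :=
  mulVec (ALmat T p L) d = bvec T μ0 ∧ (∀ i, dot (cLmat T k c L i) d ≤ γ0 i) ∧ ∀ x, 0 ≤ d x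

/-- Optimality for the linear program `LP(L)` (minimizing `-r_L^⊤ d`). -/
def LPOptimal [DecidableEq S] (T k : ℕ) (μ0 : S → ℝ)
    (p : ℕ → S → A → (S × A → ℝ) → S → ℝ) (r : ℕ → S → A → (S × A → ℝ) → ℝ)
    (c : ℕ → S → A → (S × A → ℝ) → Fin k → ℝ) (γ0 : Fin k → ℝ)
    (L : ℕ → S × A → ℝ) (d : Fin (T + 1) × S × A → ℝ) : Prop :=
  LPFeasible T k μ0 p c γ0 L d ∧
    ∀ d', LPFeasible T k μ0 p c γ0 L d' → dot (rLvec T r L) d' ≤ dot (rLvec T r L) d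

/-- The KKT system `𝒦(L)` associated with `LP(L)`. -/
def KKT [DecidableEq S] (T k : ℕ) (μ0 : S → ℝ)
    (p : ℕ → S → A → (S × A → ℝ) → S → ℝ) (r : ℕ → S → A → (S × A → ℝ) → ℝ)
    (c : ℕ → S → A → (S × A → ℝ) → Fin k → ℝ) (γ0 : Fin k → ℝ) (L : ℕ → S × A → ℝ)
    (d : Fin (T + 1) × S × A → ℝ) (y : Fin (T + 1) × S → ℝ)
    (z : Fin (T + 1) × S × A → ℝ) (lam : Fin k → ℝ) : Prop :=
  (∀ x, -(rLvec T r L x) =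
      tmulVec (ALmat T p L) y x + z x - ∑ i, cLmat T k c L i x * lam i) ∧
  mulVec (ALmat T p L) d = bvec T μ0 ∧
  (∀ i, dot (cLmat T k c L i) d ≤ γ0 i) ∧ (∀ x, 0 ≤ d x) ∧
  (∀ x, 0 ≤ z x) ∧ dot z d = 0 ∧ (∀ i, 0 ≤ lam i) ∧
  (∑ i, lam i * (dot (cLmat T k c L i) d - γ0 i)) = 0

/-- The population-level KKT system `𝒦^p(L)`. -/
def PopKKT [DecidableEq S] (T : ℕ) (μ0 : S → ℝ)
    (p : ℕ → S → A → (S × A → ℝ) → S → ℝ) (r : ℕ → S → A → (S × A → ℝ) → ℝ)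
    (L : ℕ → S × A → ℝ) (d : Fin (T + 1) × S × A → ℝ) (y : Fin (T + 1) × S → ℝ)
    (z : Fin (T + 1) × S × A → ℝ) : Prop :=
  (∀ x, -(rLvec T r L x) = tmulVec (ALmat T p L) y x + z x) ∧
  mulVec (ALmat T p L) d = bvec T μ0 ∧ (∀ x, 0 ≤ d x) ∧ (∀ x, 0 ≤ z x) ∧ dot z d = 0

/-- Bound for the dual variable `y` in CMFOMO. -/
noncomputable def yBound (cardS T : ℕ) (rmax cmax δ : ℝ) : ℝ :=
  (cardS : ℝ) * ((T : ℝ) + 1) * ((T : ℝ) + 2) / 2 * rmax * (1 + ((T : ℝ) + 1) / δ * cmax)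

/-- Bound for the dual variable `z` in CMFOMO. -/
noncomputable def zBound (cardS cardA T : ℕ) (rmax cmax δ : ℝ) : ℝ :=
  (cardS : ℝ) * (cardA : ℝ) * (((T : ℝ) + 1) ^ 2 - ((T : ℝ) + 1) + 2) * rmax *
    (1 + ((T : ℝ) + 1) / δ * cmax)

/-- Bound for the multiplier `λ` in CMFOMO. -/
noncomputable def lamBound (T : ℕ) (rmax δ : ℝ) : ℝ := ((T : ℝ) + 1) * rmax / δ

/-- The feasible region of the CMFOMO optimization problem. -/
noncomputable def CMFOMOFeasible (T k : ℕ) (rmax cmax δ : ℝ) (γ0 : Fin k → ℝ)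
    (Lv : Fin (T + 1) × S × A → ℝ) (y : Fin (T + 1) × S → ℝ)
    (z : Fin (T + 1) × S × A → ℝ) (lam w : Fin k → ℝ) : Prop :=
  (∀ x, 0 ≤ Lv x) ∧ (∀ t : Fin (T + 1), ∑ sa : S × A, Lv (t, sa.1, sa.2) = 1) ∧
  norm1 y ≤ yBound (Fintype.card S) T rmax cmax δ ∧
  (∀ x, 0 ≤ z x) ∧ norm1 z ≤ zBound (Fintype.card S) (Fintype.card A) T rmax cmax δ ∧
  (∀ i, 0 ≤ lam i ∧ lam i ≤ lamBound T rmax δ) ∧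
  (∀ i, 0 ≤ w i ∧ w i ≤ γ0 i)

/-- The CMFOMO objective function. -/
noncomputable def CMFOMOObj [DecidableEq S] (T k : ℕ) (μ0 : S → ℝ)
    (p : ℕ → S → A → (S × A → ℝ) → S → ℝ) (r : ℕ → S → A → (S × A → ℝ) → ℝ)
    (c : ℕ → S → A → (S × A → ℝ) → Fin k → ℝ) (γ0 : Fin k → ℝ)
    (c1 c2 c3 c4 c5 : ℝ) (Lv : Fin (T + 1) × S × A → ℝ) (y : Fin (T + 1) × S → ℝ)
    (z : Fin (T + 1) × S × A → ℝ) (lam w : Fin k → ℝ) : ℝ :=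
  c1 * norm2 (fun x => tmulVec (ALmat T p (toFam T Lv)) y x + z x +
        rLvec T r (toFam T Lv) x - ∑ i, cLmat T k c (toFam T Lv) i x * lam i) +
  c2 * norm2 (fun row => mulVec (ALmat T p (toFam T Lv)) Lv row - bvec T μ0 row) +
  c3 * dot z Lv +
  c4 * norm2 (fun i => γ0 i - dot (cLmat T k c (toFam T Lv) i) Lv - w i) +
  c5 * |∑ i, lam i * (γ0 i - dot (cLmat T k c (toFam T Lv) i) Lv)|

/-- The feasible region of the population-level CMFOMO problem. -/
noncomputable def PopCMFOMOFeasible (T k : ℕ) (rmax : ℝ) (γ0 : Fin k → ℝ)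
    (Lv : Fin (T + 1) × S × A → ℝ) (y : Fin (T + 1) × S → ℝ)
    (z : Fin (T + 1) × S × A → ℝ) (w : Fin k → ℝ) : Prop :=
  (∀ x, 0 ≤ Lv x) ∧ (∀ t : Fin (T + 1), ∑ sa : S × A, Lv (t, sa.1, sa.2) = 1) ∧
  norm1 y ≤ (Fintype.card S : ℝ) * ((T : ℝ) + 1) * ((T : ℝ) + 2) / 2 * rmax ∧
  (∀ x, 0 ≤ z x) ∧
  norm1 z ≤ (Fintype.card S : ℝ) * (Fintype.card A : ℝ) *
      (((T : ℝ) + 1) ^ 2 - ((T : ℝ) + 1) + 2) * rmax ∧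
  (∀ i, 0 ≤ w i ∧ w i ≤ γ0 i)

/-- The population-level CMFOMO objective function. -/
noncomputable def PopCMFOMOObj [DecidableEq S] (T k : ℕ) (μ0 : S → ℝ)
    (p : ℕ → S → A → (S × A → ℝ) → S → ℝ) (r : ℕ → S → A → (S × A → ℝ) → ℝ)
    (cp : ℕ → (S × A → ℝ) → Fin k → ℝ) (γ0 : Fin k → ℝ)
    (c1 c2 c3 c4 : ℝ) (Lv : Fin (T + 1) × S × A → ℝ) (y : Fin (T + 1) × S → ℝ)
    (z : Fin (T + 1) × S × A → ℝ) (w : Fin k → ℝ) : ℝ :=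
  c1 * norm2 (fun x => tmulVec (ALmat T p (toFam T Lv)) y x + z x + rLvec T r (toFam T Lv) x) +
  c2 * norm2 (fun row => mulVec (ALmat T p (toFam T Lv)) Lv row - bvec T μ0 row) +
  c3 * dot z Lv +
  c4 * norm2 (fun i => γ0 i -
    dot (cLmat T k (fun t _ _ m => cp t m) (toFam T Lv) i) Lv - w i)

/-- The optimal value `V*_c(L)` of the constrained MDP `CMDP(L)`. -/
noncomputable def Vstar (T k : ℕ) (μ0 : S → ℝ) (p : ℕ → S → A → (S × A → ℝ) → S → ℝ)
    (r : ℕ → S → A → (S × A → ℝ) → ℝ) (c : ℕ → S → A → (S × A → ℝ) → Fin k → ℝ)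
    (γ0 : Fin k → ℝ) (L : ℕ → S × A → ℝ) : ℝ :=
  sSup {v | ∃ π, IsPolicy π ∧ (∀ i, Cost T k μ0 p c π L i ≤ γ0 i) ∧ v = V T μ0 p r π L}

/-- The optimal value of the unconstrained MDP `MDP(L)`. -/
noncomputable def VstarU (T : ℕ) (μ0 : S → ℝ) (p : ℕ → S → A → (S × A → ℝ) → S → ℝ)
    (r : ℕ → S → A → (S × A → ℝ) → ℝ) (L : ℕ → S × A → ℝ) : ℝ :=
  sSup {v | ∃ π, IsPolicy π ∧ v = V T μ0 p r π L}

/-- The optimality gap `G_opt(π)`. -/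
noncomputable def Gopt (T k : ℕ) (μ0 : S → ℝ) (p : ℕ → S → A → (S × A → ℝ) → S → ℝ)
    (r : ℕ → S → A → (S × A → ℝ) → ℝ) (c : ℕ → S → A → (S × A → ℝ) → Fin k → ℝ)
    (γ0 : Fin k → ℝ) (π : ℕ → S → A → ℝ) : ℝ :=
  Vstar T k μ0 p r c γ0 (psiInd μ0 p π) - V T μ0 p r π (psiInd μ0 p π)

/-- The feasibility gap `G_fea(π)`. -/
noncomputable def Gfea (T k : ℕ) (μ0 : S → ℝ) (p : ℕ → S → A → (S × A → ℝ) → S → ℝ)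
    (c : ℕ → S → A → (S × A → ℝ) → Fin k → ℝ) (γ0 : Fin k → ℝ)
    (π : ℕ → S → A → ℝ) : ℝ :=
  norm2 (fun i : Fin k => min 0 (γ0 i - Cost T k μ0 p c π (psiInd μ0 p π) i))

/-- The population-level optimality gap. -/
noncomputable def GoptPop (T : ℕ) (μ0 : S → ℝ) (p : ℕ → S → A → (S × A → ℝ) → S → ℝ)
    (r : ℕ → S → A → (S × A → ℝ) → ℝ) (π : ℕ → S → A → ℝ) : ℝ :=
  VstarU T μ0 p r (psiInd μ0 p π) - V T μ0 p r π (psiInd μ0 p π)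

/-- The population-level feasibility gap. -/
noncomputable def GfeaPop (T k : ℕ) (μ0 : S → ℝ) (p : ℕ → S → A → (S × A → ℝ) → S → ℝ)
    (cp : ℕ → (S × A → ℝ) → Fin k → ℝ) (γ0 : Fin k → ℝ) (π : ℕ → S → A → ℝ) : ℝ :=
  norm2 (fun i : Fin k =>
    min 0 (γ0 i - ∑ t ∈ Finset.range (T + 1), cp t (psiInd μ0 p π t) i))

section NPlayer

variable [DecidableEq S] [DecidableEq A]

/-- Empirical state-action distribution of `N` players. -/
noncomputable def emp (N : ℕ) (x : Fin N → S × A) : S × A → ℝ :=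
  fun sa => (∑ i, if x i = sa then (1 : ℝ) else 0) / (N : ℝ)

/-- The joint law, at each time `t`, of the state-action profile of the `N` players
under the policy profile `πv`. -/
noncomputable def jointLaw (N : ℕ) (μ0 : S → ℝ) (p : ℕ → S → A → (S × A → ℝ) → S → ℝ)
    (πv : Fin N → ℕ → S → A → ℝ) : ℕ → (Fin N → S × A) → ℝ
  | 0 => fun x => ∏ i, μ0 (x i).1 * πv i 0 (x i).1 (x i).2
  | t + 1 => fun x => ∑ x' : Fin N → S × A, jointLaw N μ0 p πv t x' *
      ∏ i, p t (x' i).1 (x' i).2 (emp N x') (x i).1 * πv i (t + 1) (x i).1 (x i).2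

/-- Expected cumulative reward `V^{(i)}` of player `i` in the `N`-player game. -/
noncomputable def Vplayer (N T : ℕ) (μ0 : S → ℝ) (p : ℕ → S → A → (S × A → ℝ) → S → ℝ)
    (r : ℕ → S → A → (S × A → ℝ) → ℝ) (πv : Fin N → ℕ → S → A → ℝ) (i : Fin N) : ℝ :=
  ∑ t ∈ Finset.range (T + 1), ∑ x : Fin N → S × A,
    jointLaw N μ0 p πv t x * r t (x i).1 (x i).2 (emp N x)

/-- Expected cumulative cost `γ^{(i)}` of player `i` in the `N`-player game. -/
noncomputable def CostPlayer (N T k : ℕ) (μ0 : S → ℝ) (p : ℕ → S → A → (S × A → ℝ) → S → ℝ)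
    (c : ℕ → S → A → (S × A → ℝ) → Fin k → ℝ) (πv : Fin N → ℕ → S → A → ℝ)
    (i : Fin N) : Fin k → ℝ :=
  fun j => ∑ t ∈ Finset.range (T + 1), ∑ x : Fin N → S × A,
    jointLaw N μ0 p πv t x * c t (x i).1 (x i).2 (emp N x) j

/-- Feasibility gap `G_fea^{(i)}` of player `i` in the `N`-player game. -/
noncomputable def GfeaPlayer (N T k : ℕ) (μ0 : S → ℝ)
    (p : ℕ → S → A → (S × A → ℝ) → S → ℝ) (c : ℕ → S → A → (S × A → ℝ) → Fin k → ℝ)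
    (γ0 : Fin k → ℝ) (πv : Fin N → ℕ → S → A → ℝ) (i : Fin N) : ℝ :=
  norm2 (fun j : Fin k => min 0 (γ0 j - CostPlayer N T k μ0 p c πv i j))

/-- `(ε1, ε2)`-Nash equilibrium of the constrained `N`-player game. -/
noncomputable def IsEpsNash (N T k : ℕ) (μ0 : S → ℝ)
    (p : ℕ → S → A → (S × A → ℝ) → S → ℝ) (r : ℕ → S → A → (S × A → ℝ) → ℝ)
    (c : ℕ → S → A → (S × A → ℝ) → Fin k → ℝ) (γ0 : Fin k → ℝ)
    (πv : Fin N → ℕ → S → A → ℝ) (ε1 ε2 : ℝ) : Prop :=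
  ∀ i : Fin N,
    (∀ π', IsPolicy π' →
      GfeaPlayer N T k μ0 p c γ0 (Function.update πv i π') i = 0 →
      Vplayer N T μ0 p r (Function.update πv i π') i ≤ Vplayer N T μ0 p r πv i + ε1) ∧
    GfeaPlayer N T k μ0 p c γ0 πv i ≤ ε2

end NPlayer


section Aux

variable {S A : Type*} [Fintype S] [Fintype A]

lemma norm2_nonneg' {J : Type*} [Fintype J] (v : J → ℝ) : 0 ≤ norm2 v :=
  Real.sqrt_nonneg _

lemma norm2_eq_zero_iff' {J : Type*} [Fintype J] (v : J → ℝ) :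
    norm2 v = 0 ↔ ∀ j, v j = 0 := by
  unfold norm2
  rw [Real.sqrt_eq_zero (by positivity)]
  constructor
  · intro h j
    have := (Finset.sum_eq_zero_iff_of_nonneg (fun i _ => sq_nonneg (v i))).1 h j (mem_univ j)
    exact pow_eq_zero_iff (by norm_num) |>.1 this
  · intro h; exact Finset.sum_eq_zero fun j _ => by rw [h j]; ring

lemma dot_tmulVec' {I J : Type*} [Fintype I] [Fintype J] (M : I → J → ℝ)
    (y : I → ℝ) (d : J → ℝ) : dot (tmulVec M y) d = dot y (mulVec M d) := by
  simp only [dot, tmulVec, mulVec, Finset.sum_mul, Finset.mul_sum]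
  rw [Finset.sum_comm]
  exact Finset.sum_congr rfl fun i _ => Finset.sum_congr rfl fun j _ => by ring

lemma dot_nonneg' {J : Type*} [Fintype J] {u v : J → ℝ} (hu : ∀ j, 0 ≤ u j)
    (hv : ∀ j, 0 ≤ v j) : 0 ≤ dot u v :=
  Finset.sum_nonneg fun j _ => mul_nonneg (hu j) (hv j)

lemma gauss_sum (n : ℕ) : ∑ u ∈ Finset.range n, ((n : ℝ) - u) = n * (n + 1) / 2 := by
  induction n with
  | zero => simp
  | succ n ih =>
    rw [Finset.sum_range_succ]
    push_cast
    have h : ∀ u ∈ Finset.range n, ((n:ℝ) + 1 - u) = ((n:ℝ) - u) + 1 := fun u _ => by ring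
    rw [Finset.sum_congr rfl h, Finset.sum_add_distrib, ih]
    simp [Finset.sum_const, Finset.card_range]
    ring

lemma toFam_toVec (T : ℕ) (L : ℕ → S × A → ℝ) {t : ℕ} (ht : t ≤ T) :
    toFam T (toVec T L) t = L t := by
  funext sa
  simp only [toFam, toVec, dif_pos (Nat.lt_succ_of_le ht)]

end Aux
set_option linter.unusedSectionVars false

section Aux2

variable {S A : Type*} [Fintype S] [Fintype A]
variable {T : ℕ} {μ0 : S → ℝ} {p : ℕ → S → A → (S × A → ℝ) → S → ℝ}
  {π : ℕ → S → A → ℝ} {L : ℕ → S × A → ℝ}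

lemma psi_simplex (hμ0 : IsSimplex μ0) (hp : IsKernel T p) (hπ : IsPolicy π)
    (hL : ∀ t ≤ T, IsSimplex (L t)) : ∀ t ≤ T, IsSimplex (psi μ0 p π L t) := by
  intro t
  induction t with
  | zero =>
    intro _
    refine ⟨fun sa => mul_nonneg ((hπ 0 sa.1).1 sa.2) (hμ0.1 sa.1), ?_⟩
    rw [show (psi μ0 p π L 0) = fun sa : S × A => π 0 sa.1 sa.2 * μ0 sa.1 from rfl,
      Fintype.sum_prod_type]
    have h : ∀ s : S, ∑ a : A, π 0 s a * μ0 s = μ0 s := fun s => by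
      rw [← Finset.sum_mul, (hπ 0 s).2, one_mul]
    simp only [h]
    exact hμ0.2
  | succ t ih =>
    intro h1
    have ht : t ≤ T := Nat.le_of_succ_le h1
    have hLt := hL t ht
    have hψ := ih ht
    constructor
    · intro sa
      refine mul_nonneg ((hπ (t+1) sa.1).1 sa.2) (Finset.sum_nonneg fun sa' _ =>
        mul_nonneg ((hp t ht sa'.1 sa'.2 (L t) hLt).1 sa.1) (hψ.1 sa'))
    · rw [show (psi μ0 p π L (t+1)) = fun sa : S × A => π (t+1) sa.1 sa.2 *
        ∑ sa' : S × A, p t sa'.1 sa'.2 (L t) sa.1 * psi μ0 p π L t sa' from rfl,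
        Fintype.sum_prod_type]
      have h : ∀ s : S, ∑ a : A, π (t+1) s a *
          (∑ sa' : S × A, p t sa'.1 sa'.2 (L t) s * psi μ0 p π L t sa') =
          ∑ sa' : S × A, p t sa'.1 sa'.2 (L t) s * psi μ0 p π L t sa' := fun s => by
        rw [← Finset.sum_mul, (hπ (t+1) s).2, one_mul]
      simp only [h]
      rw [Finset.sum_comm]
      have h2 : ∀ sa' : S × A, ∑ s : S, p t sa'.1 sa'.2 (L t) s * psi μ0 p π L t sa' =
          psi μ0 p π L t sa' := fun sa' => by
        rw [← Finset.sum_mul, (hp t ht sa'.1 sa'.2 (L t) hLt).2, one_mul]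
      simp only [h2]
      exact hψ.2

lemma psiInd_simplex (hμ0 : IsSimplex μ0) (hp : IsKernel T p) (hπ : IsPolicy π) :
    ∀ t ≤ T, IsSimplex (psiInd μ0 p π t) := by
  intro t
  induction t with
  | zero =>
    intro _
    refine ⟨fun sa => mul_nonneg ((hπ 0 sa.1).1 sa.2) (hμ0.1 sa.1), ?_⟩
    rw [show (psiInd μ0 p π 0) = fun sa : S × A => π 0 sa.1 sa.2 * μ0 sa.1 from rfl,
      Fintype.sum_prod_type]
    have h : ∀ s : S, ∑ a : A, π 0 s a * μ0 s = μ0 s := fun s => by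
      rw [← Finset.sum_mul, (hπ 0 s).2, one_mul]
    simp only [h]
    exact hμ0.2
  | succ t ih =>
    intro h1
    have ht : t ≤ T := Nat.le_of_succ_le h1
    have hψ := ih ht
    constructor
    · intro sa
      refine mul_nonneg ((hπ (t+1) sa.1).1 sa.2) (Finset.sum_nonneg fun sa' _ =>
        mul_nonneg ((hp t ht sa'.1 sa'.2 _ hψ).1 sa.1) (hψ.1 sa'))
    · rw [show (psiInd μ0 p π (t+1)) = fun sa : S × A => π (t+1) sa.1 sa.2 *
        ∑ sa' : S × A, p t sa'.1 sa'.2 (psiInd μ0 p π t) sa.1 * psiInd μ0 p π t sa' from rfl,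
        Fintype.sum_prod_type]
      have h : ∀ s : S, ∑ a : A, π (t+1) s a *
          (∑ sa' : S × A, p t sa'.1 sa'.2 (psiInd μ0 p π t) s * psiInd μ0 p π t sa') =
          ∑ sa' : S × A, p t sa'.1 sa'.2 (psiInd μ0 p π t) s * psiInd μ0 p π t sa' := fun s => by
        rw [← Finset.sum_mul, (hπ (t+1) s).2, one_mul]
      simp only [h]
      rw [Finset.sum_comm]
      have h2 : ∀ sa' : S × A, ∑ s : S, p t sa'.1 sa'.2 (psiInd μ0 p π t) s *
          psiInd μ0 p π t sa' = psiInd μ0 p π t sa' := fun sa' => by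
        rw [← Finset.sum_mul, (hp t ht sa'.1 sa'.2 _ hψ).2, one_mul]
      simp only [h2]
      exact hψ.2

/-- `psi π L` agrees with `psiInd π` when `L` is consistent with `π`. -/
lemma psi_eq_of_consistent (hcons : ∀ t ≤ T, L t = psiInd μ0 p π t) :
    ∀ t ≤ T, psi μ0 p π L t = L t := by
  intro t
  induction t with
  | zero => intro _; rw [hcons 0 (Nat.zero_le T)]; rfl
  | succ t ih =>
    intro h1
    have ht : t ≤ T := Nat.le_of_succ_le h1
    funext sa
    show π (t+1) sa.1 sa.2 * ∑ sa' : S × A, p t sa'.1 sa'.2 (L t) sa.1 * psi μ0 p π L t sa'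
      = L (t+1) sa
    rw [ih ht, hcons t ht, hcons (t+1) h1]
    rfl

/-- the factorization `psiInd t (s,a) = π t s a * mass`. -/
lemma psiInd_fact (hπ : IsPolicy π) (t : ℕ) (s : S) (a : A) :
    psiInd μ0 p π t (s, a) = π t s a * ∑ a' : A, psiInd μ0 p π t (s, a') := by
  cases t with
  | zero =>
    show π 0 s a * μ0 s = _
    have : ∑ a' : A, psiInd μ0 p π 0 (s, a') = ∑ a' : A, π 0 s a' * μ0 s := rfl
    rw [this, ← Finset.sum_mul, (hπ 0 s).2, one_mul]
  | succ t =>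
    show π (t+1) s a * _ = _
    have : ∑ a' : A, psiInd μ0 p π (t+1) (s, a') = ∑ a' : A, π (t+1) s a' *
        ∑ sa' : S × A, p t sa'.1 sa'.2 (psiInd μ0 p π t) s * psiInd μ0 p π t sa' := rfl
    rw [this, ← Finset.sum_mul, (hπ (t+1) s).2, one_mul]

end Aux2
section Aux3

variable {S A : Type*} [Fintype S] [Fintype A] [DecidableEq S]
variable {T : ℕ} {p : ℕ → S → A → (S × A → ℝ) → S → ℝ} {L : ℕ → S × A → ℝ}

lemma mulVec_ALmat_lt (d : Fin (T+1) × S × A → ℝ)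
    (u : Fin (T+1)) (hu : (u:ℕ) < T) (s : S) :
    mulVec (ALmat T p L) d (u, s) =
      (∑ sa : S × A, p u sa.1 sa.2 (L u) s * d (u, sa.1, sa.2))
        - ∑ a : A, d (⟨(u:ℕ)+1, by omega⟩, s, a) := by
  have hT : (u:ℕ)+1 < T+1 := by omega
  unfold mulVec ALmat
  rw [Fintype.sum_prod_type]
  simp only [hu, if_true, add_mul, Finset.sum_add_distrib]
  rw [sub_eq_add_neg]
  congr 1
  · rw [Finset.sum_eq_single u (fun t _ ht => by
      refine Finset.sum_eq_zero fun sa _ => ?_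
      rw [if_neg ht, zero_mul]) (by simp)]
    simp
  · rw [Finset.sum_eq_single (⟨(u:ℕ)+1, hT⟩ : Fin (T+1)) (fun t _ ht => by
      refine Finset.sum_eq_zero fun sa _ => ?_
      have : ¬((t:ℕ) = (u:ℕ)+1 ∧ sa.1 = s) := by
        rintro ⟨h1, -⟩; exact ht (Fin.ext h1)
      rw [if_neg this, zero_mul]) (by simp)]
    rw [Fintype.sum_prod_type]
    rw [Finset.sum_eq_single s (fun s' _ hs' => by
      refine Finset.sum_eq_zero fun a _ => ?_
      rw [if_neg (by rintro ⟨-, h2⟩; exact hs' h2), zero_mul]) (by simp)]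
    simp

lemma mulVec_ALmat_ge (d : Fin (T+1) × S × A → ℝ)
    (u : Fin (T+1)) (hu : ¬ (u:ℕ) < T) (s : S) :
    mulVec (ALmat T p L) d (u, s) = ∑ a : A, d (⟨0, Nat.succ_pos T⟩, s, a) := by
  unfold mulVec ALmat
  rw [Fintype.sum_prod_type]
  simp only [hu, if_false]
  rw [Finset.sum_eq_single (⟨0, Nat.succ_pos T⟩ : Fin (T+1)) (fun t _ ht => by
    refine Finset.sum_eq_zero fun sa _ => ?_
    have : ¬((t:ℕ) = 0 ∧ sa.1 = s) := by
      rintro ⟨h1, -⟩; exact ht (Fin.ext h1)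
    rw [if_neg this, zero_mul]) (by simp)]
  rw [Fintype.sum_prod_type]
  rw [Finset.sum_eq_single s (fun s' _ hs' => by
    refine Finset.sum_eq_zero fun a _ => ?_
    rw [if_neg (by rintro ⟨-, h2⟩; exact hs' h2), zero_mul]) (by simp)]
  simp

end Aux3
section Aux4

variable {S A : Type*} [Fintype S] [Fintype A] [DecidableEq S]
variable {T : ℕ} {p : ℕ → S → A → (S × A → ℝ) → S → ℝ} {L : ℕ → S × A → ℝ}

lemma tmulVec_ALmat (y : Fin (T+1) × S → ℝ) (t : Fin (T+1)) (s : S) (a : A) :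
    tmulVec (ALmat T p L) y (t, s, a) =
      (if (t:ℕ) < T then ∑ s' : S, p t s a (L t) s' * y (t, s') else 0)
        + (if ht0 : (t:ℕ) = 0 then y (⟨T, Nat.lt_succ_self T⟩, s)
           else - y (⟨(t:ℕ)-1, by omega⟩, s)) := by
  unfold tmulVec ALmat
  rw [Fintype.sum_prod_type]
  have hsplit : ∀ (u : Fin (T+1)) (s' : S),
      (if (u:ℕ) < T then
        (if t = u then p (u:ℕ) s a (L (u:ℕ)) s' else 0) +
          (if (t:ℕ) = (u:ℕ) + 1 ∧ s = s' then (-1:ℝ) else 0)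
      else if (t:ℕ) = 0 ∧ s = s' then 1 else 0) * y (u, s')
      = (if (u:ℕ) < T then (if t = u then p (u:ℕ) s a (L (u:ℕ)) s' else 0) else 0) * y (u, s')
        + (if (u:ℕ) < T then (if (t:ℕ) = (u:ℕ) + 1 ∧ s = s' then (-1:ℝ) else 0) else 0) * y (u, s')
        + (if (u:ℕ) < T then 0 else if (t:ℕ) = 0 ∧ s = s' then (1:ℝ) else 0) * y (u, s') := by
    intro u s'
    by_cases hu : (u:ℕ) < T
    · rw [if_pos hu, if_pos hu, if_pos hu, if_pos hu]; ring
    · rw [if_neg hu, if_neg hu, if_neg hu, if_neg hu]; ring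
  simp only [hsplit, Finset.sum_add_distrib]
  have hS1 : (∑ u : Fin (T+1), ∑ s' : S,
      (if (u:ℕ) < T then (if t = u then p (u:ℕ) s a (L (u:ℕ)) s' else 0) else 0) * y (u, s'))
      = if (t:ℕ) < T then ∑ s' : S, p t s a (L t) s' * y (t, s') else 0 := by
    rw [Finset.sum_eq_single t (fun u _ hu => by
      refine Finset.sum_eq_zero fun s' _ => ?_
      by_cases h : (u:ℕ) < T
      · rw [if_pos h, if_neg (fun h' => hu h'.symm), zero_mul]
      · rw [if_neg h, zero_mul]) (by simp)]
    by_cases h : (t:ℕ) < T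
    · simp [h]
    · simp [h]
  have hS2 : (∑ u : Fin (T+1), ∑ s' : S,
      (if (u:ℕ) < T then (if (t:ℕ) = (u:ℕ) + 1 ∧ s = s' then (-1:ℝ) else 0) else 0) * y (u, s'))
      = if ht0 : (t:ℕ) = 0 then 0 else - y (⟨(t:ℕ)-1, by omega⟩, s) := by
    by_cases ht0 : (t:ℕ) = 0
    · rw [dif_pos ht0]
      refine Finset.sum_eq_zero fun u _ => Finset.sum_eq_zero fun s' _ => ?_
      by_cases h : (u:ℕ) < T
      · rw [if_pos h, if_neg (by rintro ⟨h1, -⟩; omega), zero_mul]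
      · rw [if_neg h, zero_mul]
    · rw [dif_neg ht0]
      have htm : (t:ℕ) - 1 < T + 1 := by omega
      rw [Finset.sum_eq_single (⟨(t:ℕ)-1, htm⟩ : Fin (T+1)) (fun u _ hu => by
        refine Finset.sum_eq_zero fun s' _ => ?_
        by_cases h : (u:ℕ) < T
        · rw [if_pos h, if_neg (by
            rintro ⟨h1, -⟩
            exact hu (Fin.ext (by simp only [Fin.val_mk]; omega))), zero_mul]
        · rw [if_neg h, zero_mul]) (by simp)]
      have hlt : ((⟨(t:ℕ)-1, htm⟩ : Fin (T+1)) : ℕ) < T := by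
        have := t.isLt; simp only [Fin.val_mk]; omega
      rw [Finset.sum_eq_single s (fun s' _ hs' => by
        rw [if_pos hlt, if_neg (by rintro ⟨-, h2⟩; exact hs' h2.symm), zero_mul]) (by simp)]
      rw [if_pos hlt, if_pos ⟨by simp only [Fin.val_mk]; omega, rfl⟩]
      ring
  have hS3 : (∑ u : Fin (T+1), ∑ s' : S,
      (if (u:ℕ) < T then 0 else if (t:ℕ) = 0 ∧ s = s' then (1:ℝ) else 0) * y (u, s'))
      = if (t:ℕ) = 0 then y (⟨T, Nat.lt_succ_self T⟩, s) else 0 := by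
    rw [Finset.sum_eq_single (⟨T, Nat.lt_succ_self T⟩ : Fin (T+1)) (fun u _ hu => by
      refine Finset.sum_eq_zero fun s' _ => ?_
      have h : (u:ℕ) < T := by
        rcases Nat.lt_or_ge (u:ℕ) T with h | h
        · exact h
        · exact absurd (Fin.ext (by have := u.isLt; simp only [Fin.val_mk]; omega)) hu
      rw [if_pos h, zero_mul]) (by simp)]
    have h : ¬ ((⟨T, Nat.lt_succ_self T⟩ : Fin (T+1)) : ℕ) < T := by simp
    rw [Finset.sum_eq_single s (fun s' _ hs' => by
      rw [if_neg h, if_neg (by rintro ⟨-, h2⟩; exact hs' h2.symm), zero_mul]) (by simp)]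
    rw [if_neg h]
    by_cases ht0 : (t:ℕ) = 0
    · rw [if_pos ⟨ht0, rfl⟩, if_pos ht0, one_mul]
    · rw [if_neg (by rintro ⟨h1, -⟩; exact ht0 h1), if_neg ht0, zero_mul]
  rw [hS1, hS2, hS3]
  by_cases ht0 : (t:ℕ) = 0
  · rw [dif_pos ht0, dif_pos ht0, if_pos ht0]; ring
  · rw [dif_neg ht0, dif_neg ht0, if_neg ht0]; ring

end Aux4
/-- Optimal value functions `valA j = V_{T-j}` by backward induction. -/
noncomputable def valA {S A : Type*} [Fintype S] [Fintype A] [Nonempty A]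
    (T : ℕ) (p : ℕ → S → A → (S × A → ℝ) → S → ℝ)
    (r : ℕ → S → A → (S × A → ℝ) → ℝ) (L : ℕ → S × A → ℝ) : ℕ → S → ℝ
  | 0 => fun s => Finset.univ.sup' Finset.univ_nonempty (fun a : A => r T s a (L T))
  | (j+1) => fun s => Finset.univ.sup' Finset.univ_nonempty (fun a : A =>
      r (T-j-1) s a (L (T-j-1)) +
        ∑ s' : S, p (T-j-1) s a (L (T-j-1)) s' * valA T p r L j s')

/-- `Vv t = V_t`, the optimal value function at time `t`. -/
noncomputable def Vv {S A : Type*} [Fintype S] [Fintype A] [Nonempty A]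
    (T : ℕ) (p : ℕ → S → A → (S × A → ℝ) → S → ℝ)
    (r : ℕ → S → A → (S × A → ℝ) → ℝ) (L : ℕ → S × A → ℝ) (t : ℕ) : S → ℝ :=
  valA T p r L (T - t)

/-- The state-action value `Q_t(s,a)`. -/
noncomputable def Qv {S A : Type*} [Fintype S] [Fintype A] [Nonempty A]
    (T : ℕ) (p : ℕ → S → A → (S × A → ℝ) → S → ℝ)
    (r : ℕ → S → A → (S × A → ℝ) → ℝ) (L : ℕ → S × A → ℝ)
    (t : ℕ) (s : S) (a : A) : ℝ :=
  r t s a (L t) + if t < T then ∑ s' : S, p t s a (L t) s' * Vv T p r L (t+1) s' else 0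

section Aux5

variable {S A : Type*} [Fintype S] [Fintype A] [Nonempty A]
variable {T : ℕ} {p : ℕ → S → A → (S × A → ℝ) → S → ℝ}
  {r : ℕ → S → A → (S × A → ℝ) → ℝ} {L : ℕ → S × A → ℝ}

lemma Vv_eq {t : ℕ} (ht : t ≤ T) (s : S) :
    Vv T p r L t s = Finset.univ.sup' Finset.univ_nonempty (fun a : A => Qv T p r L t s a) := by
  rcases eq_or_lt_of_le ht with h | h
  · subst h
    unfold Vv Qv
    rw [Nat.sub_self]
    show valA t p r L 0 s = _
    simp [valA, lt_irrefl]
  · have h1 : T - t = (T - (t+1)) + 1 := by omega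
    have h2 : T - (T - (t+1)) - 1 = t := by omega
    unfold Vv Qv
    rw [h1]
    show Finset.univ.sup' Finset.univ_nonempty (fun a : A =>
      r (T-(T-(t+1))-1) s a (L (T-(T-(t+1))-1)) +
        ∑ s' : S, p (T-(T-(t+1))-1) s a (L (T-(T-(t+1))-1)) s' * valA T p r L (T-(t+1)) s') = _
    rw [h2]
    simp only [h, if_true]
    rfl

lemma Qv_le_Vv {t : ℕ} (ht : t ≤ T) (s : S) (a : A) : Qv T p r L t s a ≤ Vv T p r L t s := by
  rw [Vv_eq ht]
  exact Finset.le_sup' _ (Finset.mem_univ a)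

lemma exists_Qv_eq_Vv {t : ℕ} (ht : t ≤ T) (s : S) :
    ∃ a : A, Vv T p r L t s = Qv T p r L t s a := by
  rw [Vv_eq ht]
  obtain ⟨a, _, ha⟩ := Finset.exists_mem_eq_sup' Finset.univ_nonempty (fun a : A => Qv T p r L t s a)
  exact ⟨a, ha⟩

lemma Vv_bounds {k : ℕ} {c : ℕ → S → A → (S × A → ℝ) → Fin k → ℝ} {rmax cmax : ℝ}
    (hp : IsKernel T p) (hb : BoundedData T k r c rmax cmax)
    (hL : ∀ t ≤ T, IsSimplex (L t)) :
    ∀ t ≤ T, ∀ s, 0 ≤ Vv T p r L t s ∧ Vv T p r L t s ≤ ((T:ℝ) + 1 - t) * rmax := by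
  have key : ∀ j, ∀ t, t ≤ T → T - t = j → ∀ s,
      0 ≤ Vv T p r L t s ∧ Vv T p r L t s ≤ ((T:ℝ) + 1 - t) * rmax := by
    intro j
    induction j with
    | zero =>
      intro t ht hj s
      have htT : t = T := by omega
      have hr : ∀ a : A, 0 ≤ Qv T p r L t s a ∧ Qv T p r L t s a ≤ rmax := by
        intro a
        unfold Qv
        rw [if_neg (by omega : ¬ t < T)]
        have := (hb t ht s a (L t) (hL t ht)).1
        constructor <;> linarith [this.1, this.2]
      rw [Vv_eq ht]
      constructor
      · obtain ⟨a⟩ := ‹Nonempty A›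
        exact le_trans (hr a).1 (Finset.le_sup' _ (Finset.mem_univ a))
      · refine le_trans (Finset.sup'_le _ _ fun a _ => (hr a).2) ?_
        have hc : (t:ℝ) = (T:ℝ) := by exact_mod_cast congrArg (Nat.cast : ℕ → ℝ) htT
        rw [show ((T:ℝ) + 1 - t) * rmax = rmax by rw [hc]; ring]
    | succ j ih =>
      intro t ht hj s
      have htT : t < T := by omega
      have hQ : ∀ a : A, 0 ≤ Qv T p r L t s a ∧
          Qv T p r L t s a ≤ ((T:ℝ) + 1 - t) * rmax := by
        intro a
        unfold Qv
        rw [if_pos htT]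
        have hrb := (hb t ht s a (L t) (hL t ht)).1
        have hps := hp t ht s a (L t) (hL t ht)
        have hcont : 0 ≤ ∑ s' : S, p t s a (L t) s' * Vv T p r L (t+1) s' ∧
            (∑ s' : S, p t s a (L t) s' * Vv T p r L (t+1) s') ≤ ((T:ℝ) - t) * rmax := by
          have hV : ∀ s', 0 ≤ Vv T p r L (t+1) s' ∧
              Vv T p r L (t+1) s' ≤ ((T:ℝ) + 1 - ((t:ℝ)+1)) * rmax := fun s' => by
            have := ih (t+1) (by omega) (by omega) s'
            push_cast at this
            exact this
          constructor
          · exact Finset.sum_nonneg fun s' _ => mul_nonneg (hps.1 s') (hV s').1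
          · calc (∑ s' : S, p t s a (L t) s' * Vv T p r L (t+1) s')
                ≤ ∑ s' : S, p t s a (L t) s' * (((T:ℝ) + 1 - ((t:ℝ)+1)) * rmax) := by
                  refine Finset.sum_le_sum fun s' _ => ?_
                  exact mul_le_mul_of_nonneg_left (hV s').2 (hps.1 s')
              _ = ((T:ℝ) - t) * rmax := by
                  rw [← Finset.sum_mul, hps.2, one_mul]; push_cast; ring
        constructor
        · linarith [hrb.1, hcont.1]
        · push_cast; linarith [hrb.2, hcont.2]
      rw [Vv_eq ht]
      constructor
      · obtain ⟨a⟩ := ‹Nonempty A›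
        exact le_trans (hQ a).1 (Finset.le_sup' _ (Finset.mem_univ a))
      · exact Finset.sup'_le _ _ fun a _ => (hQ a).2
  intro t ht s
  exact key (T - t) t ht rfl s

end Aux5
section Aux6

variable {S A : Type*} [Fintype S] [Fintype A] [DecidableEq S]
variable {T k : ℕ} {μ0 : S → ℝ} {p : ℕ → S → A → (S × A → ℝ) → S → ℝ}
  {r : ℕ → S → A → (S × A → ℝ) → ℝ} {cp : ℕ → (S × A → ℝ) → Fin k → ℝ}
  {π : ℕ → S → A → ℝ} {Ls : ℕ → S × A → ℝ}

lemma ALmat_toFam : ALmat T p (toFam T (toVec T Ls)) = ALmat T p Ls := by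
  funext row col
  unfold ALmat
  by_cases h : (row.1:ℕ) < T
  · simp only [h, if_true]
    rw [toFam_toVec T Ls (Nat.le_of_lt_succ row.1.isLt)]
  · simp only [h, if_false]

lemma rLvec_toFam : rLvec T r (toFam T (toVec T Ls)) = rLvec T r Ls := by
  funext x
  unfold rLvec
  rw [toFam_toVec T Ls (Nat.le_of_lt_succ x.1.isLt)]

lemma cLmat_toFam : cLmat T k (fun t _ _ m => cp t m) (toFam T (toVec T Ls)) =
    cLmat T k (fun t _ _ m => cp t m) Ls := by
  funext i x
  unfold cLmat
  rw [toFam_toVec T Ls (Nat.le_of_lt_succ x.1.isLt)]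

lemma bvec_apply (u : Fin (T+1)) (s : S) :
    bvec T μ0 (u, s) = if (u:ℕ) = T then μ0 s else 0 := rfl

lemma psi_flow_mulVec (hμ0 : IsSimplex μ0) (hπ : IsPolicy π) :
    mulVec (ALmat T p Ls) (toVec T (psi μ0 p π Ls)) = bvec T μ0 := by
  funext row
  obtain ⟨u, s⟩ := row
  by_cases h : (u:ℕ) < T
  · rw [mulVec_ALmat_lt _ u h s]
    have hbv : bvec T μ0 (u, s) = 0 := by
      rw [bvec_apply, if_neg (by omega)]
    rw [hbv]
    have h1 : ∀ sa : S × A, toVec T (psi μ0 p π Ls) (u, sa.1, sa.2) = psi μ0 p π Ls u sa := by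
      intro sa; rfl
    have h2 : ∀ a : A, toVec T (psi μ0 p π Ls) (⟨(u:ℕ)+1, by omega⟩, s, a)
        = psi μ0 p π Ls ((u:ℕ)+1) (s, a) := by
      intro a; rfl
    simp only [h1, h2]
    have h3 : ∀ a : A, psi μ0 p π Ls ((u:ℕ)+1) (s, a) = π ((u:ℕ)+1) s a *
        ∑ sa' : S × A, p (u:ℕ) sa'.1 sa'.2 (Ls (u:ℕ)) s * psi μ0 p π Ls (u:ℕ) sa' :=
      fun a => rfl
    simp only [h3]
    rw [← Finset.sum_mul, (hπ ((u:ℕ)+1) s).2, one_mul]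
    exact sub_self _
  · rw [mulVec_ALmat_ge _ u h s]
    have hbv : bvec T μ0 (u, s) = μ0 s := by
      rw [bvec_apply, if_pos (by have := u.isLt; omega)]
    rw [hbv]
    have h2 : ∀ a : A, toVec T (psi μ0 p π Ls) (⟨0, Nat.succ_pos T⟩, s, a)
        = π 0 s a * μ0 s := fun a => rfl
    simp only [h2]
    rw [← Finset.sum_mul, (hπ 0 s).2, one_mul]

lemma V_eq_dot : V T μ0 p r π Ls = dot (rLvec T r Ls) (toVec T (psi μ0 p π Ls)) := by
  symm
  unfold V dot toVec rLvec
  rw [Fintype.sum_prod_type, ← Fin.sum_univ_eq_sum_range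
    (fun t => ∑ sa : S × A, r t sa.1 sa.2 (Ls t) * psi μ0 p π Ls t sa) (T+1)]

lemma Cost_eq (hmass : ∀ t ≤ T, ∑ sa : S × A, psi μ0 p π Ls t sa = 1) (i : Fin k) :
    Cost T k μ0 p (fun t _ _ m => cp t m) π Ls i
      = ∑ t ∈ Finset.range (T+1), cp t (Ls t) i := by
  unfold Cost
  refine Finset.sum_congr rfl fun t htm => ?_
  rw [← Finset.mul_sum, hmass t (Nat.lt_succ_iff.1 (Finset.mem_range.1 htm)), mul_one]

lemma dot_cLmat (hM : ∀ t ≤ T, ∑ sa : S × A, Ls t sa = 1) (i : Fin k) :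
    dot (cLmat T k (fun t _ _ m => cp t m) Ls i) (toVec T Ls)
      = ∑ t ∈ Finset.range (T+1), cp t (Ls t) i := by
  have h1 : dot (cLmat T k (fun t _ _ m => cp t m) Ls i) (toVec T Ls)
      = ∑ t ∈ Finset.range (T+1), cp t (Ls t) i * ∑ sa : S × A, Ls t sa := by
    unfold dot cLmat toVec
    rw [Fintype.sum_prod_type, ← Fin.sum_univ_eq_sum_range
      (fun t => cp t (Ls t) i * ∑ sa : S × A, Ls t sa) (T+1)]
    refine Finset.sum_congr rfl fun x _ => ?_
    rw [Finset.mul_sum]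
  rw [h1]
  refine Finset.sum_congr rfl fun t htm => ?_
  rw [hM t (Nat.lt_succ_iff.1 (Finset.mem_range.1 htm)), mul_one]

lemma dot_bvec (y : Fin (T+1) × S → ℝ) :
    dot y (bvec T μ0) = ∑ s : S, y (⟨T, Nat.lt_succ_self T⟩, s) * μ0 s := by
  unfold dot
  rw [Fintype.sum_prod_type]
  simp only [bvec_apply]
  rw [Finset.sum_eq_single (⟨T, Nat.lt_succ_self T⟩ : Fin (T+1)) (fun u _ hu => by
    refine Finset.sum_eq_zero fun s _ => ?_
    rw [if_neg (fun h => hu (Fin.ext h)), mul_zero]) (by simp)]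
  refine Finset.sum_congr rfl fun s _ => ?_
  rw [if_pos rfl]

lemma inPi_of_consistent (hπ : IsPolicy π) (hcons : ∀ t ≤ T, Ls t = psiInd μ0 p π t) :
    InPi T Ls π := by
  refine ⟨hπ, fun t ht s a hm => ?_⟩
  rw [hcons t ht] at hm ⊢
  rw [psiInd_fact hπ t s a]
  exact (mul_div_cancel_right₀ _ (ne_of_gt hm)).symm

lemma psiInd_eq_of_LP (hL : ∀ t ≤ T, IsSimplex (Ls t)) (hPi : InPi T Ls π)
    (hflow : mulVec (ALmat T p Ls) (toVec T Ls) = bvec T μ0) :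
    ∀ t ≤ T, psiInd μ0 p π t = Ls t := by
  have h0 : ∀ s : S, ∑ a : A, Ls 0 (s, a) = μ0 s := by
    intro s
    have h := congrFun hflow (⟨T, Nat.lt_succ_self T⟩, s)
    rw [mulVec_ALmat_ge _ _ (by simp) s] at h
    rw [bvec_apply, if_pos rfl] at h
    simpa only [toVec, Fin.val_mk] using h
  have hstep : ∀ u, u < T → ∀ s : S, ∑ a : A, Ls (u+1) (s, a)
      = ∑ sa : S × A, p u sa.1 sa.2 (Ls u) s * Ls u sa := by
    intro u hu s
    have hu1 : u < T + 1 := by omega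
    have h := congrFun hflow (⟨u, hu1⟩, s)
    rw [mulVec_ALmat_lt _ _ (by simpa using hu) s] at h
    rw [bvec_apply, if_neg (by simp only [Fin.val_mk]; omega)] at h
    simp only [toVec, Fin.val_mk, Prod.mk.eta] at h
    linarith [h]
  intro t
  induction t with
  | zero =>
    intro _
    funext sa
    obtain ⟨s, a⟩ := sa
    show π 0 s a * μ0 s = Ls 0 (s, a)
    rw [← h0 s]
    by_cases hm : 0 < ∑ a' : A, Ls 0 (s, a')
    · rw [hPi.2 0 (Nat.zero_le T) s a hm]
      exact div_mul_cancel₀ _ (ne_of_gt hm)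
    · have hz : ∑ a' : A, Ls 0 (s, a') = 0 :=
        le_antisymm (not_lt.1 hm)
          (Finset.sum_nonneg fun a' _ => (hL 0 (Nat.zero_le T)).1 (s, a'))
      rw [hz, mul_zero]
      exact ((Finset.sum_eq_zero_iff_of_nonneg
        (fun a' _ => (hL 0 (Nat.zero_le T)).1 (s, a'))).1 hz a (Finset.mem_univ a)).symm
  | succ t ih =>
    intro h1
    have ht : t ≤ T := Nat.le_of_succ_le h1
    have htT : t < T := h1
    funext sa
    obtain ⟨s, a⟩ := sa
    show π (t+1) s a * (∑ sa' : S × A,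
        p t sa'.1 sa'.2 (psiInd μ0 p π t) s * psiInd μ0 p π t sa') = Ls (t+1) (s, a)
    rw [ih ht, ← hstep t htT s]
    by_cases hm : 0 < ∑ a' : A, Ls (t+1) (s, a')
    · rw [hPi.2 (t+1) h1 s a hm]
      exact div_mul_cancel₀ _ (ne_of_gt hm)
    · have hz : ∑ a' : A, Ls (t+1) (s, a') = 0 :=
        le_antisymm (not_lt.1 hm)
          (Finset.sum_nonneg fun a' _ => (hL (t+1) h1).1 (s, a'))
      rw [hz, mul_zero]
      exact ((Finset.sum_eq_zero_iff_of_nonneg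
        (fun a' _ => (hL (t+1) h1).1 (s, a'))).1 hz a (Finset.mem_univ a)).symm

end Aux6
/-- Theorem 4.1 (Population-level CMFOMO): under population-level constraints,
`(π*, L*)` is a CMFG Nash equilibrium if and only if `L*` is a mean-field flow,
`π* ∈ Π(L*)`, and some `(y*, z*, w*)` within the explicit bounds makes
`(L*, y*, z*, w*)` a point of the population-level CMFOMO problem with objective `0`. -/
theorem pop_cmfomo_characterization {S A : Type*} [Fintype S] [Fintype A] [DecidableEq S]
    [Nonempty S] [Nonempty A]
    (T k : ℕ) (μ0 : S → ℝ) (hμ0 : IsSimplex μ0)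
    (p : ℕ → S → A → (S × A → ℝ) → S → ℝ) (hp : IsKernel T p)
    (r : ℕ → S → A → (S × A → ℝ) → ℝ)
    (cp : ℕ → (S × A → ℝ) → Fin k → ℝ) (γ0 : Fin k → ℝ)
    (rmax cmax : ℝ)
    (hb : BoundedData T k r (fun t _ _ m => cp t m) rmax cmax)
    (c1 c2 c3 c4 : ℝ) (hc1 : 0 < c1) (hc2 : 0 < c2) (hc3 : 0 < c3) (hc4 : 0 < c4)
    (πs : ℕ → S → A → ℝ) (Ls : ℕ → S × A → ℝ) :
    IsCMFGNash T k μ0 p r (fun t _ _ m => cp t m) γ0 πs Ls ↔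
      ((∀ t ≤ T, IsSimplex (Ls t)) ∧ InPi T Ls πs ∧
        ∃ (y : Fin (T + 1) × S → ℝ) (z : Fin (T + 1) × S × A → ℝ) (w : Fin k → ℝ),
          PopCMFOMOFeasible T k rmax γ0 (toVec T Ls) y z w ∧
          PopCMFOMOObj T k μ0 p r cp γ0 c1 c2 c3 c4 (toVec T Ls) y z w = 0) := by
  classical
  constructor
  · rintro ⟨⟨hπpol, hfeasN, hoptN⟩, hcons⟩
    have hL : ∀ t ≤ T, IsSimplex (Ls t) := fun t ht => by
      rw [hcons t ht]; exact psiInd_simplex hμ0 hp hπpol t ht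
    have hψeq : ∀ t ≤ T, psi μ0 p πs Ls t = Ls t := psi_eq_of_consistent hcons
    have hLv0 : ∀ x, 0 ≤ toVec T Ls x :=
      fun x => (hL (x.1:ℕ) (Nat.le_of_lt_succ x.1.isLt)).1 (x.2.1, x.2.2)
    have hvec : toVec T (psi μ0 p πs Ls) = toVec T Ls := by
      funext x
      unfold toVec
      rw [hψeq (x.1:ℕ) (Nat.le_of_lt_succ x.1.isLt)]
    have hflow : mulVec (ALmat T p Ls) (toVec T Ls) = bvec T μ0 := by
      rw [← hvec]; exact psi_flow_mulVec hμ0 hπpol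
    have hM : ∀ t ≤ T, ∑ sa : S × A, Ls t sa = 1 := fun t ht => (hL t ht).2
    have hrmax : 0 ≤ rmax := by
      obtain ⟨s0⟩ := ‹Nonempty S›
      obtain ⟨a0⟩ := ‹Nonempty A›
      have := (hb 0 (Nat.zero_le T) s0 a0 (Ls 0) (hL 0 (Nat.zero_le T))).1
      linarith [this.1, this.2]
    have hVb := Vv_bounds (T := T) (p := p) (r := r) (L := Ls) hp hb hL
    -- the dual variables
    set y : Fin (T+1) × S → ℝ := fun us =>
      if (us.1:ℕ) < T then Vv T p r Ls ((us.1:ℕ)+1) us.2 else - Vv T p r Ls 0 us.2 with hy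
    set z : Fin (T+1) × S × A → ℝ := fun x =>
      - rLvec T r Ls x - tmulVec (ALmat T p Ls) y x with hz
    set w : Fin k → ℝ := fun i =>
      γ0 i - dot (cLmat T k (fun t _ _ m => cp t m) Ls i) (toVec T Ls) with hw
    -- explicit formula for z
    have hzeq : ∀ (t : Fin (T+1)) (s : S) (a : A),
        z (t, s, a) = Vv T p r Ls (t:ℕ) s - Qv T p r Ls (t:ℕ) s a := by
      intro t s a
      simp only [hz]
      unfold Qv
      rw [tmulVec_ALmat y t s a]
      have h1 : (if (t:ℕ) < T then ∑ s' : S, p t s a (Ls t) s' * y (t, s') else 0)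
          = (if (t:ℕ) < T then
              ∑ s' : S, p t s a (Ls t) s' * Vv T p r Ls ((t:ℕ)+1) s' else 0) := by
        by_cases h : (t:ℕ) < T
        · rw [if_pos h, if_pos h]
          refine Finset.sum_congr rfl fun s' _ => ?_
          congr 1
          simp only [hy]
          rw [if_pos h]
        · rw [if_neg h, if_neg h]
      have h2 : (if ht0 : (t:ℕ) = 0 then y (⟨T, Nat.lt_succ_self T⟩, s)
          else - y (⟨(t:ℕ)-1, by omega⟩, s)) = - Vv T p r Ls (t:ℕ) s := by
        by_cases ht0 : (t:ℕ) = 0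
        · rw [dif_pos ht0, ht0]
          simp only [hy]
          rw [if_neg (by simp)]
        · rw [dif_neg ht0]
          simp only [hy]
          rw [if_pos (by have := t.isLt; omega : (t:ℕ)-1 < T)]
          have h3 : ((t:ℕ) - 1) + 1 = (t:ℕ) := by omega
          rw [h3]
      rw [h1, h2]
      have hr0 : rLvec T r Ls (t, s, a) = r (t:ℕ) s a (Ls (t:ℕ)) := rfl
      rw [hr0]
      ring
    have hz0 : ∀ x, 0 ≤ z x := by
      rintro ⟨t, s, a⟩
      rw [hzeq t s a]
      have := Qv_le_Vv (T := T) (p := p) (r := r) (L := Ls)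
        (Nat.le_of_lt_succ t.isLt) s a
      linarith
    have hQ0 : ∀ t ≤ T, ∀ (s : S) (a : A), 0 ≤ Qv T p r Ls t s a := by
      intro t ht s a
      unfold Qv
      have hr0 := (hb t ht s a (Ls t) (hL t ht)).1.1
      have hbr : 0 ≤ (if t < T then
          ∑ s' : S, p t s a (Ls t) s' * Vv T p r Ls (t+1) s' else 0) := by
        by_cases h : t < T
        · rw [if_pos h]
          exact Finset.sum_nonneg fun s' _ =>
            mul_nonneg ((hp t ht s a (Ls t) (hL t ht)).1 s') (hVb (t+1) (by omega) s').1
        · rw [if_neg h]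
      linarith
    -- cost related facts
    have hdci : ∀ i, dot (cLmat T k (fun t _ _ m => cp t m) Ls i) (toVec T Ls)
        = Cost T k μ0 p (fun t _ _ m => cp t m) πs Ls i := by
      intro i
      rw [dot_cLmat hM i, Cost_eq (fun t ht => by rw [hψeq t ht]; exact (hL t ht).2) i]
    have hcnn : ∀ i, 0 ≤ dot (cLmat T k (fun t _ _ m => cp t m) Ls i) (toVec T Ls) := by
      intro i
      refine dot_nonneg' (fun x => ?_) hLv0
      exact ((hb (x.1:ℕ) (Nat.le_of_lt_succ x.1.isLt) x.2.1 x.2.2 (Ls (x.1:ℕ))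
        (hL (x.1:ℕ) (Nat.le_of_lt_succ x.1.isLt))).2 i).1
    -- key duality computation
    have hdotz : ∀ d : Fin (T+1) × S × A → ℝ, mulVec (ALmat T p Ls) d = bvec T μ0 →
        dot z d = (∑ s : S, Vv T p r Ls 0 s * μ0 s) - dot (rLvec T r Ls) d := by
      intro d hd
      have h1 : ∀ x, z x * d x =
          -(rLvec T r Ls x * d x) - tmulVec (ALmat T p Ls) y x * d x :=
        fun x => by simp only [hz]; ring
      have h2 : dot z d = - dot (rLvec T r Ls) d - dot (tmulVec (ALmat T p Ls) y) d := by
        unfold dot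
        simp only [h1]
        rw [Finset.sum_sub_distrib]
        congr 1
        rw [← Finset.sum_neg_distrib]
      rw [h2, dot_tmulVec', hd, dot_bvec]
      have h3 : ∑ s : S, y (⟨T, Nat.lt_succ_self T⟩, s) * μ0 s
          = - ∑ s : S, Vv T p r Ls 0 s * μ0 s := by
        rw [← Finset.sum_neg_distrib]
        refine Finset.sum_congr rfl fun s _ => ?_
        simp only [hy]
        rw [if_neg (by simp)]
        ring
      rw [h3]
      ring
    -- a greedy policy
    have hgreedy : ∃ ag : ℕ → S → A, ∀ t ≤ T, ∀ s,
        Vv T p r Ls t s = Qv T p r Ls t s (ag t s) := by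
      have h : ∀ (t : ℕ) (s : S), ∃ a : A, t ≤ T → Vv T p r Ls t s = Qv T p r Ls t s a := by
        intro t s
        by_cases ht : t ≤ T
        · obtain ⟨a, ha⟩ := exists_Qv_eq_Vv (T := T) (p := p) (r := r) (L := Ls) ht s
          exact ⟨a, fun _ => ha⟩
        · obtain ⟨a⟩ := ‹Nonempty A›
          exact ⟨a, fun h' => absurd h' ht⟩
      choose ag hag using h
      exact ⟨ag, fun t ht s => hag t s ht⟩
    obtain ⟨ag, hag⟩ := hgreedy
    set πg : ℕ → S → A → ℝ := fun t s a => if a = ag t s then 1 else 0 with hπg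
    have hπgpol : IsPolicy πg := by
      intro t s
      constructor
      · intro a; simp only [hπg]; split <;> norm_num
      · simp only [hπg]
        simp [Finset.sum_ite_eq']
    have hψg : ∀ t ≤ T, IsSimplex (psi μ0 p πg Ls t) := psi_simplex hμ0 hp hπgpol hL
    have hdg : mulVec (ALmat T p Ls) (toVec T (psi μ0 p πg Ls)) = bvec T μ0 :=
      psi_flow_mulVec hμ0 hπgpol
    have hzψg : dot z (toVec T (psi μ0 p πg Ls)) = 0 := by
      unfold dot
      refine Finset.sum_eq_zero fun x _ => ?_
      obtain ⟨t, s, a⟩ := x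
      by_cases hA : a = ag (t:ℕ) s
      · rw [hzeq t s a, hA, ← hag (t:ℕ) (Nat.le_of_lt_succ t.isLt) s, sub_self, zero_mul]
      · have hfac : ∃ B : ℝ, psi μ0 p πg Ls (t:ℕ) (s, a) = πg (t:ℕ) s a * B := by
          cases h' : (t:ℕ) with
          | zero => exact ⟨μ0 s, rfl⟩
          | succ n => exact ⟨_, rfl⟩
        obtain ⟨B, hB⟩ := hfac
        have hv0 : toVec T (psi μ0 p πg Ls) (t, s, a) = 0 := by
          show psi μ0 p πg Ls (t:ℕ) (s, a) = 0
          rw [hB]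
          simp only [hπg]
          rw [if_neg hA, zero_mul]
        rw [hv0, mul_zero]
    have hVg : V T μ0 p r πg Ls = ∑ s : S, Vv T p r Ls 0 s * μ0 s := by
      have h := hdotz _ hdg
      rw [hzψg] at h
      rw [V_eq_dot]
      linarith
    have hcostg : ∀ i, Cost T k μ0 p (fun t _ _ m => cp t m) πg Ls i ≤ γ0 i := by
      intro i
      rw [Cost_eq (fun t ht => (hψg t ht).2) i]
      have h2 := hfeasN i
      rw [Cost_eq (fun t ht => by rw [hψeq t ht]; exact (hL t ht).2) i] at h2
      exact h2
    have hVle := hoptN πg hπgpol hcostg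
    have hVs : V T μ0 p r πs Ls = dot (rLvec T r Ls) (toVec T Ls) := by
      rw [V_eq_dot, hvec]
    have ht3 : dot z (toVec T Ls) = 0 := by
      have hge : 0 ≤ dot z (toVec T Ls) := dot_nonneg' hz0 hLv0
      have hdz := hdotz _ hflow
      linarith [hdz, hVg, hVle, hVs]
    -- norm bounds
    have hybound : norm1 y ≤ (Fintype.card S : ℝ) * ((T:ℝ)+1) * ((T:ℝ)+2) / 2 * rmax := by
      have hpt : ∀ us : Fin (T+1) × S, |y us| ≤
          (if ((us.1:ℕ)) < T then (T:ℝ) - (us.1:ℕ) else (T:ℝ)+1) * rmax := by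
        rintro ⟨u, s⟩
        by_cases h : (u:ℕ) < T
        · simp only [hy, h, if_true]
          rw [abs_of_nonneg (hVb ((u:ℕ)+1) (by omega) s).1]
          have h2 := (hVb ((u:ℕ)+1) (by omega) s).2
          push_cast at h2 ⊢
          linarith
        · simp only [hy, h, if_false]
          rw [abs_neg, abs_of_nonneg (hVb 0 (Nat.zero_le T) s).1]
          have h2 := (hVb 0 (Nat.zero_le T) s).2
          push_cast at h2
          linarith
      calc norm1 y ≤ ∑ us : Fin (T+1) × S,
            (if ((us.1:ℕ)) < T then (T:ℝ) - (us.1:ℕ) else (T:ℝ)+1) * rmax :=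
            Finset.sum_le_sum fun us _ => hpt us
        _ = ∑ u : Fin (T+1), ∑ s : S,
            (if ((u:ℕ)) < T then (T:ℝ) - (u:ℕ) else (T:ℝ)+1) * rmax := by
            rw [Fintype.sum_prod_type]
        _ = (Fintype.card S : ℝ) *
            ∑ u : Fin (T+1), (if ((u:ℕ)) < T then (T:ℝ) - (u:ℕ) else (T:ℝ)+1) * rmax := by
            rw [Finset.mul_sum]
            refine Finset.sum_congr rfl fun u _ => ?_
            rw [Finset.sum_const, Finset.card_univ, nsmul_eq_mul]
        _ = (Fintype.card S : ℝ) * ((T:ℝ)+1) * ((T:ℝ)+2) / 2 * rmax := by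
            rw [Fin.sum_univ_eq_sum_range
              (fun u => (if u < T then (T:ℝ) - u else (T:ℝ)+1) * rmax) (T+1)]
            rw [Finset.sum_range_succ, if_neg (lt_irrefl T)]
            have hcg : ∀ u ∈ Finset.range T,
                (if u < T then (T:ℝ) - u else (T:ℝ)+1) * rmax = ((T:ℝ) - u) * rmax :=
              fun u hu => by rw [if_pos (Finset.mem_range.1 hu)]
            rw [Finset.sum_congr rfl hcg, ← Finset.sum_mul, gauss_sum]
            ring
    have hzbound : norm1 z ≤ (Fintype.card S : ℝ) * (Fintype.card A : ℝ) *
        (((T:ℝ)+1)^2 - ((T:ℝ)+1) + 2) * rmax := by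
      have hpt : ∀ x : Fin (T+1) × S × A, |z x| ≤ ((T:ℝ) + 1 - (x.1:ℕ)) * rmax := by
        rintro ⟨t, s, a⟩
        have hle := Qv_le_Vv (T := T) (p := p) (r := r) (L := Ls)
          (Nat.le_of_lt_succ t.isLt) s a
        rw [hzeq t s a, abs_of_nonneg (by linarith)]
        have h1 := (hVb (t:ℕ) (Nat.le_of_lt_succ t.isLt) s).2
        have h2 := hQ0 (t:ℕ) (Nat.le_of_lt_succ t.isLt) s a
        linarith
      have hsum : (∑ x : Fin (T+1) × S × A, ((T:ℝ) + 1 - (x.1:ℕ)) * rmax)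
          = ((Fintype.card S : ℝ) * (Fintype.card A : ℝ)) *
              ((((T:ℝ)+1) * ((T:ℝ)+2) / 2) * rmax) := by
        calc (∑ x : Fin (T+1) × S × A, ((T:ℝ) + 1 - (x.1:ℕ)) * rmax)
            = ∑ t : Fin (T+1), ∑ sa : S × A, ((T:ℝ) + 1 - (t:ℕ)) * rmax := by
              rw [Fintype.sum_prod_type]
          _ = ∑ t : Fin (T+1), ((Fintype.card S : ℝ) * (Fintype.card A : ℝ)) *
                (((T:ℝ) + 1 - (t:ℕ)) * rmax) := by
              refine Finset.sum_congr rfl fun t _ => ?_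
              rw [Finset.sum_const, Finset.card_univ, Fintype.card_prod, nsmul_eq_mul]
              push_cast
              ring
          _ = ((Fintype.card S : ℝ) * (Fintype.card A : ℝ)) *
                ((∑ t : Fin (T+1), ((T:ℝ) + 1 - (t:ℕ))) * rmax) := by
              rw [← Finset.mul_sum, ← Finset.sum_mul]
          _ = ((Fintype.card S : ℝ) * (Fintype.card A : ℝ)) *
                ((((T:ℝ)+1) * ((T:ℝ)+2) / 2) * rmax) := by
              rw [Fin.sum_univ_eq_sum_range (fun u => (T:ℝ) + 1 - u) (T+1)]
              have hg := gauss_sum (T+1)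
              push_cast at hg
              rw [hg]
              ring
      have hle1 : norm1 z ≤ ((Fintype.card S : ℝ) * (Fintype.card A : ℝ)) *
          ((((T:ℝ)+1) * ((T:ℝ)+2) / 2) * rmax) := by
        rw [← hsum]
        exact Finset.sum_le_sum fun x _ => hpt x
      have hcS : (0:ℝ) ≤ (Fintype.card S : ℝ) := Nat.cast_nonneg _
      have hcA : (0:ℝ) ≤ (Fintype.card A : ℝ) := Nat.cast_nonneg _
      have hT0 : (0:ℝ) ≤ (T:ℝ) := Nat.cast_nonneg _
      nlinarith [mul_nonneg (mul_nonneg hcS hcA) hrmax, sq_nonneg ((T:ℝ) - 1),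
        mul_nonneg (mul_nonneg (mul_nonneg hcS hcA) hrmax) hT0]
    -- assemble
    refine ⟨hL, inPi_of_consistent hπpol hcons, y, z, w, ⟨?_, ?_, hybound, hz0, hzbound, ?_⟩, ?_⟩
    · exact hLv0
    · intro t
      exact (hL (t:ℕ) (Nat.le_of_lt_succ t.isLt)).2
    · intro i
      constructor
      · simp only [hw]
        rw [hdci i]
        linarith [hfeasN i]
      · simp only [hw]
        linarith [hcnn i]
    · unfold PopCMFOMOObj
      rw [ALmat_toFam, rLvec_toFam, cLmat_toFam]
      have ht1 : norm2 (fun x => tmulVec (ALmat T p Ls) y x + z x + rLvec T r Ls x) = 0 :=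
        (norm2_eq_zero_iff' _).2 fun x => by simp only [hz]; ring
      have ht2 : norm2 (fun row =>
          mulVec (ALmat T p Ls) (toVec T Ls) row - bvec T μ0 row) = 0 :=
        (norm2_eq_zero_iff' _).2 fun row => by rw [hflow]; ring
      have ht4 : norm2 (fun i => γ0 i -
          dot (cLmat T k (fun t _ _ m => cp t m) Ls i) (toVec T Ls) - w i) = 0 :=
        (norm2_eq_zero_iff' _).2 fun i => by simp only [hw]; ring
      rw [ht1, ht2, ht3, ht4]
      ring
  · rintro ⟨hL, hInPi, y, z, w, hfea, hobj⟩
    have hπpol := hInPi.1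
    have hLv0 : ∀ x, 0 ≤ toVec T Ls x :=
      fun x => (hL (x.1:ℕ) (Nat.le_of_lt_succ x.1.isLt)).1 (x.2.1, x.2.2)
    obtain ⟨-, -, -, hz0, -, hwb⟩ := hfea
    have hM : ∀ t ≤ T, ∑ sa : S × A, Ls t sa = 1 := fun t ht => (hL t ht).2
    -- split the objective into four vanishing terms
    unfold PopCMFOMOObj at hobj
    rw [ALmat_toFam, rLvec_toFam, cLmat_toFam] at hobj
    have n1 : 0 ≤ norm2 (fun x => tmulVec (ALmat T p Ls) y x + z x + rLvec T r Ls x) :=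
      norm2_nonneg' _
    have n2 : 0 ≤ norm2 (fun row => mulVec (ALmat T p Ls) (toVec T Ls) row - bvec T μ0 row) :=
      norm2_nonneg' _
    have n3 : 0 ≤ dot z (toVec T Ls) := dot_nonneg' hz0 hLv0
    have n4 : 0 ≤ norm2 (fun i => γ0 i -
        dot (cLmat T k (fun t _ _ m => cp t m) Ls i) (toVec T Ls) - w i) := norm2_nonneg' _
    have e1 : norm2 (fun x => tmulVec (ALmat T p Ls) y x + z x + rLvec T r Ls x) = 0 := by
      nlinarith [mul_nonneg hc1.le n1, mul_nonneg hc2.le n2, mul_nonneg hc3.le n3,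
        mul_nonneg hc4.le n4]
    have e2 : norm2 (fun row => mulVec (ALmat T p Ls) (toVec T Ls) row - bvec T μ0 row) = 0 := by
      nlinarith [mul_nonneg hc1.le n1, mul_nonneg hc2.le n2, mul_nonneg hc3.le n3,
        mul_nonneg hc4.le n4]
    have e3 : dot z (toVec T Ls) = 0 := by
      nlinarith [mul_nonneg hc1.le n1, mul_nonneg hc2.le n2, mul_nonneg hc3.le n3,
        mul_nonneg hc4.le n4]
    have e4 : norm2 (fun i => γ0 i -
        dot (cLmat T k (fun t _ _ m => cp t m) Ls i) (toVec T Ls) - w i) = 0 := by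
      nlinarith [mul_nonneg hc1.le n1, mul_nonneg hc2.le n2, mul_nonneg hc3.le n3,
        mul_nonneg hc4.le n4]
    have hdual : ∀ x, tmulVec (ALmat T p Ls) y x + z x + rLvec T r Ls x = 0 :=
      (norm2_eq_zero_iff' _).1 e1
    have hflow : mulVec (ALmat T p Ls) (toVec T Ls) = bvec T μ0 := by
      funext row
      exact sub_eq_zero.1 (((norm2_eq_zero_iff' _).1 e2) row)
    have hwi : ∀ i, dot (cLmat T k (fun t _ _ m => cp t m) Ls i) (toVec T Ls) = γ0 i - w i :=
      fun i => by have := ((norm2_eq_zero_iff' _).1 e4) i; linarith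
    -- consistency
    have hcons : ∀ t ≤ T, Ls t = psiInd μ0 p πs t :=
      fun t ht => (psiInd_eq_of_LP hL hInPi hflow t ht).symm
    have hψeq : ∀ t ≤ T, psi μ0 p πs Ls t = Ls t := psi_eq_of_consistent hcons
    have hvec : toVec T (psi μ0 p πs Ls) = toVec T Ls := by
      funext x
      unfold toVec
      rw [hψeq (x.1:ℕ) (Nat.le_of_lt_succ x.1.isLt)]
    -- cost feasibility of any policy
    have hcost : ∀ π', IsPolicy π' → ∀ i,
        Cost T k μ0 p (fun t _ _ m => cp t m) π' Ls i = γ0 i - w i := by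
      intro π' hπ' i
      rw [Cost_eq (fun t ht => (psi_simplex hμ0 hp hπ' hL t ht).2) i, ← dot_cLmat hM i, hwi i]
    -- the LP weak-duality computation
    have hrd : ∀ d : Fin (T+1) × S × A → ℝ, mulVec (ALmat T p Ls) d = bvec T μ0 →
        dot (rLvec T r Ls) d = - dot y (bvec T μ0) - dot z d := by
      intro d hd
      have h1 : ∀ x, rLvec T r Ls x * d x =
          -(tmulVec (ALmat T p Ls) y x * d x) - z x * d x := fun x => by
        have h := hdual x
        have : rLvec T r Ls x = - tmulVec (ALmat T p Ls) y x - z x := by linarith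
        rw [this]; ring
      have h2 : dot (rLvec T r Ls) d =
          - dot (tmulVec (ALmat T p Ls) y) d - dot z d := by
        unfold dot
        simp only [h1]
        rw [Finset.sum_sub_distrib]
        congr 1
        rw [← Finset.sum_neg_distrib]
      rw [h2, dot_tmulVec', hd]
    refine ⟨⟨hπpol, fun i => by rw [hcost πs hπpol i]; linarith [(hwb i).1], ?_⟩, hcons⟩
    intro π' hπ' _
    have hd' : mulVec (ALmat T p Ls) (toVec T (psi μ0 p π' Ls)) = bvec T μ0 :=
      psi_flow_mulVec hμ0 hπ'
    have hdz' : 0 ≤ dot z (toVec T (psi μ0 p π' Ls)) :=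
      dot_nonneg' hz0 fun x =>
        (psi_simplex hμ0 hp hπ' hL (x.1:ℕ) (Nat.le_of_lt_succ x.1.isLt)).1 (x.2.1, x.2.2)
    have hV' : V T μ0 p r π' Ls = - dot y (bvec T μ0) - dot z (toVec T (psi μ0 p π' Ls)) := by
      rw [V_eq_dot, hrd _ hd']
    have hVs : V T μ0 p r πs Ls = - dot y (bvec T μ0) := by
      rw [V_eq_dot, hvec, hrd _ hflow, e3, sub_zero]
    rw [hV', hVs]
    linarith

end CMFG
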